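/- A Markushevich basis B has Property (F_p) if and only if B is quasi-greedy and conservative; moreover max{Δ_c, C_q} ≤ 𝓕_p ≤ 2 + C_q + 2C_qΔ_c. -/
import Mathlib


open Finset

/-- A semi-normalized Markushevich basis of a real Banach space `X`. -/
structure MBasis (X : Type*) [NormedAddCommGroup X] [NormedSpace ℝ X] where
  e : ℕ → X
  coord : ℕ → X →L[ℝ] ℝ
  biorth : ∀ n m, coord n (e m) = if n = m then 1 else 0
  dense_span : (Submodule.span ℝ (Set.range e)).topologicalClosure = ⊤
  total : ∀ f : X, (∀ n, coord n f = 0) → f = 0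
  semiNormalized : ∃ c₁ c₂ : ℝ, 0 < c₁ ∧
    ∀ n, c₁ ≤ ‖e n‖ ∧ c₁ ≤ ‖coord n‖ ∧ ‖e n‖ ≤ c₂ ∧ ‖coord n‖ ≤ c₂

namespace MBasis

variable {X : Type*} [NormedAddCommGroup X] [NormedSpace ℝ X] (B : MBasis X)

/-- The support of a vector. -/
def supp (f : X) : Set ℕ := {n | B.coord n f ≠ 0}

/-- Finitely supported vectors. -/
def FinSupp (f : X) : Prop := (B.supp f).Finite

/-- Coordinate projection onto a finite set. -/
noncomputable def P (A : Finset ℕ) (f : X) : X := ∑ n ∈ A, B.coord n f • B.e n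

/-- Indicator sum `1_A`. -/
noncomputable def ind (A : Finset ℕ) : X := ∑ n ∈ A, B.e n

/-- Partial sum of order `k`. -/
noncomputable def S (k : ℕ) (f : X) : X := B.P (Finset.range k) f

/-- `A` is a greedy set for `f`. -/
def Greedy (f : X) (A : Finset ℕ) : Prop :=
  ∀ n ∈ A, ∀ m ∉ A, |B.coord m f| ≤ |B.coord n f|

/-- Quasi-greedy with constant `C`. -/
def QuasiGreedy (C : ℝ) : Prop :=
  ∀ f : X, ∀ A : Finset ℕ, B.Greedy f A → ‖f - B.P A f‖ ≤ C * ‖f‖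

/-- Democratic with constant `C`. -/
def Democratic (C : ℝ) : Prop :=
  ∀ A B' : Finset ℕ, A.card ≤ B'.card → ‖B.ind A‖ ≤ C * ‖B.ind B'‖

/-- Conservative with constant `C`. -/
def Conservative (C : ℝ) : Prop :=
  ∀ A B' : Finset ℕ, A.card ≤ B'.card → (∀ i ∈ A, ∀ j ∈ B', i < j) →
    ‖B.ind A‖ ≤ C * ‖B.ind B'‖

/-- Symmetric for largest coefficients with constant `C`. -/
def SLC (C : ℝ) : Prop :=
  ∀ (f : X) (A B' : Finset ℕ) (ε η : ℕ → ℝ),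
    A.card ≤ B'.card → Disjoint A B' →
    Disjoint (B.supp f) ((A ∪ B' : Finset ℕ) : Set ℕ) →
    (∀ n, |B.coord n f| ≤ 1) →
    (∀ n ∈ A, |ε n| = 1) → (∀ n ∈ B', |η n| = 1) →
    ‖f + ∑ n ∈ A, ε n • B.e n‖ ≤ C * ‖f + ∑ n ∈ B', η n • B.e n‖

/-- Almost-greedy with constant `C`. -/
def AlmostGreedy (C : ℝ) : Prop :=
  ∀ f : X, ∀ A : Finset ℕ, B.Greedy f A →
    ∀ B' : Finset ℕ, B'.card ≤ A.card → ‖f - B.P A f‖ ≤ C * ‖f - B.P B' f‖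

/-- Partially-greedy with constant `C`. -/
def PartiallyGreedy (C : ℝ) : Prop :=
  ∀ f : X, ∀ A : Finset ℕ, B.Greedy f A →
    ∀ k ≤ A.card, ‖f - B.P A f‖ ≤ C * ‖f - B.S k f‖

/-- Property (F) with constant `C`. -/
def PropF (C : ℝ) : Prop :=
  ∀ (f g : X) (A B' : Finset ℕ),
    B.FinSupp f → B.FinSupp g → Disjoint (B.supp f) (B.supp g) →
    A.card ≤ B'.card → Disjoint A B' →
    Disjoint (B.supp (f + g)) ((A ∪ B' : Finset ℕ) : Set ℕ) →
    (∀ n, |B.coord n f| ≤ 1) →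
    (∀ m n, B.coord n g ≠ 0 → |B.coord m f| ≤ |B.coord n g|) →
    ‖f + B.ind A‖ ≤ C * ‖f + g + B.ind B'‖

/-- Property (F_p) with constant `C` (extra condition `A < supp(g) ∪ B`). -/
def PropFp (C : ℝ) : Prop :=
  ∀ (f g : X) (A B' : Finset ℕ),
    B.FinSupp f → B.FinSupp g → Disjoint (B.supp f) (B.supp g) →
    A.card ≤ B'.card → Disjoint A B' →
    Disjoint (B.supp (f + g)) ((A ∪ B' : Finset ℕ) : Set ℕ) →
    (∀ n, |B.coord n f| ≤ 1) →
    (∀ m n, B.coord n g ≠ 0 → |B.coord m f| ≤ |B.coord n g|) →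
    (∀ i ∈ A, (∀ j ∈ B.supp g, i < j) ∧ (∀ j ∈ B', i < j)) →
    ‖f + B.ind A‖ ≤ C * ‖f + g + B.ind B'‖

/-- The set of coordinates of `y` with coefficient of modulus one. -/
def unitSet (y : X) : Set ℕ := {n | B.coord n y ≠ 0 ∧ |B.coord n y| = 1}

/-- Property (F*) with constant `C`. -/
def PropFStar (C : ℝ) : Prop :=
  ∀ f z y : X,
    B.FinSupp f → B.FinSupp z → B.FinSupp y →
    Disjoint (B.supp f) (B.supp z) → Disjoint (B.supp f) (B.supp y) →
    Disjoint (B.supp z) (B.supp y) →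
    (∀ n, |B.coord n f| ≤ 1) → (∀ n, |B.coord n z| ≤ 1) →
    (B.supp z).ncard ≤ (B.unitSet y).ncard →
    (∀ m n, B.coord n y ≠ 0 → |B.coord m f| ≤ |B.coord n y|) →
    ‖f + z‖ ≤ C * ‖f + y‖

/-- Property (F*_p) with constant `C` (extra condition `supp z < supp (f + y)`). -/
def PropFStarP (C : ℝ) : Prop :=
  ∀ f z y : X,
    B.FinSupp f → B.FinSupp z → B.FinSupp y →
    Disjoint (B.supp f) (B.supp z) → Disjoint (B.supp f) (B.supp y) →
    Disjoint (B.supp z) (B.supp y) →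
    (∀ n, |B.coord n f| ≤ 1) → (∀ n, |B.coord n z| ≤ 1) →
    (B.supp z).ncard ≤ (B.unitSet y).ncard →
    (∀ m n, B.coord n y ≠ 0 → |B.coord m f| ≤ |B.coord n y|) →
    (∀ i ∈ B.supp z, ∀ j ∈ B.supp (f + y), i < j) →
    ‖f + z‖ ≤ C * ‖f + y‖

end MBasis

section Aux
namespace MBasis
variable {X : Type*} [NormedAddCommGroup X] [NormedSpace ℝ X] (B : MBasis X)

lemma coord_P (A : Finset ℕ) (f : X) (n : ℕ) :
    B.coord n (B.P A f) = if n ∈ A then B.coord n f else 0 := by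
  simp only [MBasis.P, map_sum, map_smul, B.biorth, smul_eq_mul, mul_ite, mul_one, mul_zero]
  simp [Finset.sum_ite_eq' A n (fun m => B.coord m f), eq_comm]

lemma coord_ind (A : Finset ℕ) (n : ℕ) :
    B.coord n (B.ind A) = if n ∈ A then 1 else 0 := by
  simp only [MBasis.ind, map_sum, B.biorth]
  simp [Finset.sum_ite_eq' A n (fun _ => (1:ℝ)), eq_comm]

lemma P_eq_self (f : X) (A : Finset ℕ) (hA : ∀ n, B.coord n f ≠ 0 → n ∈ A) :
    B.P A f = f := by
  have h : ∀ n, B.coord n (B.P A f - f) = 0 := by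
    intro n
    rw [map_sub, B.coord_P]
    by_cases hn : n ∈ A
    · simp [hn]
    · simp only [hn, if_false]
      have := mt (hA n) hn
      simp at this
      simp [this]
  exact sub_eq_zero.mp (B.total _ h)

lemma P_add (A : Finset ℕ) (f g : X) : B.P A (f + g) = B.P A f + B.P A g := by
  simp [MBasis.P, add_smul, Finset.sum_add_distrib]

lemma P_union (A C : Finset ℕ) (hd : Disjoint A C) (f : X) :
    B.P (A ∪ C) f = B.P A f + B.P C f := by
  simp [MBasis.P, Finset.sum_union hd]

end MBasis
end Aux
section Aux2
namespace MBasis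
variable {X : Type*} [NormedAddCommGroup X] [NormedSpace ℝ X] (B : MBasis X)

lemma e_pos : 0 < ‖B.e 0‖ := by
  obtain ⟨c₁, c₂, hc₁, hsn⟩ := B.semiNormalized
  exact lt_of_lt_of_le hc₁ (hsn 0).1

lemma qg_one_le {Cq : ℝ} (hq : B.QuasiGreedy Cq) : 1 ≤ Cq := by
  have h0 := hq (B.e 0) ∅ (by intro n hn; simp at hn)
  have he := B.e_pos
  simp [MBasis.P] at h0
  nlinarith

lemma cons_nonneg {Δc : ℝ} (hc : B.Conservative Δc) : 0 ≤ Δc := by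
  have h0 := hc ∅ {0} (by simp) (by simp)
  have he := B.e_pos
  simp [MBasis.ind] at h0
  nlinarith

theorem qg_cons_propFp {Cq Δc : ℝ} (hq : B.QuasiGreedy Cq) (hc : B.Conservative Δc) :
    B.PropFp (2 + Cq + 2 * Cq * Δc) := by
  have hCq1 : 1 ≤ Cq := B.qg_one_le hq
  have hΔc0 : 0 ≤ Δc := B.cons_nonneg hc
  intro f g A B' hf hg hfg hcard hAB hsupp hf1 hfg2 horder
  set h := f + g + B.ind B' with hh
  set sg := hg.toFinset with hsg
  have hmemsg : ∀ n, n ∈ sg ↔ B.coord n g ≠ 0 := by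
    intro n; simp [hsg, MBasis.supp]
  have hdfg : ∀ n, B.coord n f ≠ 0 → B.coord n g = 0 := by
    intro n hn
    by_contra hgn
    exact Set.disjoint_left.mp hfg hn hgn
  have hBf : ∀ n ∈ B', B.coord n f = 0 ∧ B.coord n g = 0 := by
    intro n hn
    have hnn : n ∉ B.supp (f + g) := by
      intro hmem
      exact Set.disjoint_left.mp hsupp hmem (by simp [hn])
    have hsum : B.coord n f + B.coord n g = 0 := by
      simpa [MBasis.supp, map_add] using hnn
    by_cases hfn : B.coord n f = 0
    · exact ⟨hfn, by linarith⟩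
    · have := hdfg n hfn
      constructor <;> linarith
  have hgB : ∀ n, B.coord n g ≠ 0 → n ∉ B' ∧ B.coord n f = 0 := by
    intro n hn
    constructor
    · intro hnb; exact hn (hBf n hnb).2
    · by_contra hfn
      exact hn (hdfg n hfn)
  have coordh : ∀ n, B.coord n h =
      B.coord n f + B.coord n g + (if n ∈ B' then 1 else 0) := by
    intro n; simp [hh, map_add, B.coord_ind]
  have ch1 : ∀ n ∈ B', B.coord n h = 1 := by
    intro n hn
    rw [coordh n, (hBf n hn).1, (hBf n hn).2]
    simp [hn]
  have chg : ∀ n, B.coord n g ≠ 0 → B.coord n h = B.coord n g := by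
    intro n hn
    rw [coordh n, (hgB n hn).2, if_neg (hgB n hn).1]
    ring
  have chf : ∀ n, B.coord n g = 0 → n ∉ B' → B.coord n h = B.coord n f := by
    intro n h1 h2
    rw [coordh n, h1, if_neg h2]; ring
  set G := sg.filter (fun n => 1 ≤ |B.coord n g|) with hG
  have hGlow : ∀ n ∈ G, 1 ≤ |B.coord n h| := by
    intro n hn
    rw [Finset.mem_filter] at hn
    rw [chg n ((hmemsg n).mp hn.1)]
    exact hn.2
  have hGhigh : ∀ m, m ∉ G → m ∉ B' → |B.coord m h| ≤ 1 := by
    intro m hm hmb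
    by_cases hgm : B.coord m g = 0
    · rw [chf m hgm hmb]; exact hf1 m
    · rw [chg m hgm]
      rw [hG, Finset.mem_filter] at hm
      push_neg at hm
      exact le_of_lt (hm ((hmemsg m).mpr hgm))
  have hB'1 : ∀ m ∈ B', |B.coord m h| = 1 := by
    intro m hm; rw [ch1 m hm]; simp
  have greedyG : B.Greedy h G := by
    intro n hn m hm
    refine le_trans ?_ (hGlow n hn)
    by_cases hmb : m ∈ B'
    · exact le_of_eq (hB'1 m hmb)
    · exact hGhigh m hm hmb
  have greedyGB : B.Greedy h (G ∪ B') := by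
    intro n hn m hm
    rw [Finset.mem_union] at hn hm
    push_neg at hm
    have h1 : 1 ≤ |B.coord n h| := by
      rcases hn with hn | hn
      · exact hGlow n hn
      · exact le_of_eq (hB'1 n hn).symm
    exact le_trans (hGhigh m hm.1 hm.2) h1
  have greedyAll : B.Greedy h (sg ∪ B') := by
    intro n hn m hm
    rw [Finset.mem_union] at hn hm
    push_neg at hm
    have hmg : B.coord m g = 0 := by
      by_contra hmg; exact hm.1 ((hmemsg m).mpr hmg)
    rw [chf m hmg hm.2]
    rcases hn with hn | hn
    · rw [chg n ((hmemsg n).mp hn)]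
      exact hfg2 m n ((hmemsg n).mp hn)
    · rw [ch1 n hn]
      simpa using hf1 m
  have hfeq : h - B.P (sg ∪ B') h = f := by
    refine sub_eq_zero.mp (B.total (h - B.P (sg ∪ B') h - f) ?_)
    intro n
    rw [map_sub, map_sub, B.coord_P]
    by_cases hn : n ∈ sg ∪ B'
    · rw [if_pos hn]
      rw [Finset.mem_union] at hn
      have : B.coord n f = 0 := by
        rcases hn with hn | hn
        · exact (hgB n ((hmemsg n).mp hn)).2
        · exact (hBf n hn).1
      rw [this]; ring
    · rw [if_neg hn]
      rw [Finset.mem_union] at hn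
      push_neg at hn
      have hng : B.coord n g = 0 := by
        by_contra hng; exact hn.1 ((hmemsg n).mpr hng)
      rw [coordh n, hng, if_neg hn.2]; ring
  have hnf : ‖f‖ ≤ Cq * ‖h‖ := by
    rw [← hfeq]; exact hq h _ greedyAll
  have hdisjGB : Disjoint G B' := by
    rw [Finset.disjoint_left]
    intro n hn hnb
    rw [hG, Finset.mem_filter] at hn
    exact (hgB n ((hmemsg n).mp hn.1)).1 hnb
  have hPB' : B.P B' h = B.ind B' := by
    unfold MBasis.P MBasis.ind
    refine Finset.sum_congr rfl (fun n hn => ?_)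
    rw [ch1 n hn, one_smul]
  have hindeq : B.ind B' = (h - B.P G h) - (h - B.P (G ∪ B') h) := by
    rw [B.P_union G B' hdisjGB, hPB']; abel
  have hnB' : ‖B.ind B'‖ ≤ Cq * ‖h‖ + Cq * ‖h‖ := by
    rw [hindeq]
    exact le_trans (norm_sub_le _ _)
      (add_le_add (hq h G greedyG) (hq h _ greedyGB))
  have hnA : ‖B.ind A‖ ≤ Δc * ‖B.ind B'‖ :=
    hc A B' hcard (fun i hi j hj => (horder i hi).2 j hj)
  have hnorm : ‖f + B.ind A‖ ≤ ‖f‖ + ‖B.ind A‖ := norm_add_le _ _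
  have h0 : 0 ≤ ‖h‖ := norm_nonneg _
  have hB0 : 0 ≤ ‖B.ind B'‖ := norm_nonneg _
  calc ‖f + B.ind A‖ ≤ ‖f‖ + ‖B.ind A‖ := hnorm
    _ ≤ Cq * ‖h‖ + Δc * ‖B.ind B'‖ := add_le_add hnf hnA
    _ ≤ Cq * ‖h‖ + Δc * (Cq * ‖h‖ + Cq * ‖h‖) := by nlinarith
    _ ≤ (2 + Cq + 2 * Cq * Δc) * ‖h‖ := by nlinarith

end MBasis
end Aux2
section Aux3
namespace MBasis
variable {X : Type*} [NormedAddCommGroup X] [NormedSpace ℝ X] (B : MBasis X)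

lemma supp_zero : B.supp (0 : X) = ∅ := by
  ext n; simp [MBasis.supp]

lemma coord_comb (A : Finset ℕ) (c : ℕ → ℝ) (n : ℕ) :
    B.coord n (∑ m ∈ A, c m • B.e m) = if n ∈ A then c n else 0 := by
  simp only [map_sum, map_smul, B.biorth, smul_eq_mul, mul_ite, mul_one, mul_zero]
  simp [Finset.sum_ite_eq' A n c, eq_comm]

lemma norm_P_le (A : Finset ℕ) (x : X) :
    ‖B.P A x‖ ≤ (∑ n ∈ A, ‖B.coord n‖ * ‖B.e n‖) * ‖x‖ := by
  rw [Finset.sum_mul]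
  refine le_trans (norm_sum_le _ _) (Finset.sum_le_sum fun n _ => ?_)
  rw [norm_smul]
  calc ‖B.coord n x‖ * ‖B.e n‖ ≤ (‖B.coord n‖ * ‖x‖) * ‖B.e n‖ := by
        exact mul_le_mul_of_nonneg_right ((B.coord n).le_opNorm x) (norm_nonneg _)
    _ = ‖B.coord n‖ * ‖B.e n‖ * ‖x‖ := by ring

theorem propFp_cons {Fp : ℝ} (hp : B.PropFp Fp) : B.Conservative Fp := by
  intro A B' hcard horder
  have hAB : Disjoint A B' := by
    rw [Finset.disjoint_left]
    intro i hi hib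
    exact lt_irrefl i (horder i hi i hib)
  have key := hp 0 0 A B' (by simp [MBasis.FinSupp, B.supp_zero])
    (by simp [MBasis.FinSupp, B.supp_zero]) (by simp [B.supp_zero])
    hcard hAB (by simp [B.supp_zero]) (by simp)
    (by intro m n hn; simp at hn) ?_
  · simpa using key
  · intro i hi
    exact ⟨by simp [B.supp_zero], fun j hj => horder i hi j hj⟩

theorem qg_finsupp {Fp : ℝ} (hp : B.PropFp Fp) (f : X) (hfin : B.FinSupp f)
    (A : Finset ℕ) (hA : B.Greedy f A) : ‖f - B.P A f‖ ≤ Fp * ‖f‖ := by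
  obtain ⟨c₁, c₂, hc₁, hsn⟩ := B.semiNormalized
  have hc₂ : 0 < c₂ := lt_of_lt_of_le hc₁ (le_trans (hsn 0).2.1 (hsn 0).2.2.2)
  set u := f - B.P A f with hu
  set v := B.P A f with hv
  have hcu : ∀ n, B.coord n u = if n ∈ A then 0 else B.coord n f := by
    intro n
    rw [hu, map_sub, B.coord_P]
    split_ifs <;> simp
  have hcv : ∀ n, B.coord n v = if n ∈ A then B.coord n f else 0 := fun n => B.coord_P A f n
  set M := c₂ * ‖u‖ + 1 with hMdef
  have hM : 0 < M := by nlinarith [norm_nonneg u]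
  have hbound : ∀ n, |B.coord n u| ≤ c₂ * ‖u‖ := by
    intro n
    calc |B.coord n u| = ‖B.coord n u‖ := (Real.norm_eq_abs _).symm
      _ ≤ ‖B.coord n‖ * ‖u‖ := (B.coord n).le_opNorm u
      _ ≤ c₂ * ‖u‖ := mul_le_mul_of_nonneg_right (hsn n).2.2.2 (norm_nonneg u)
  have hcsu : ∀ n, B.coord n (M⁻¹ • u) = M⁻¹ * B.coord n u := by
    intro n; rw [map_smul]; rfl
  have hcsv : ∀ n, B.coord n (M⁻¹ • v) = M⁻¹ * B.coord n v := by
    intro n; rw [map_smul]; rfl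
  have hMinv : (0:ℝ) < M⁻¹ := inv_pos.mpr hM
  have key := hp (M⁻¹ • u) (M⁻¹ • v) ∅ ∅ ?_ ?_ ?_ (le_refl _) (by simp) (by simp) ?_ ?_ ?_
  · rw [show M⁻¹ • u + M⁻¹ • v + B.ind ∅ = M⁻¹ • f + B.ind ∅ by
      rw [← smul_add, hu, hv, sub_add_cancel]] at key
    simp only [MBasis.ind, Finset.sum_empty, add_zero] at key
    rw [norm_smul, norm_smul, Real.norm_eq_abs, abs_of_pos hMinv] at key
    nlinarith [mul_le_mul_of_nonneg_left key hM.le, mul_inv_cancel₀ (ne_of_gt hM)]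
  · refine hfin.subset fun n hn => ?_
    simp only [MBasis.supp, Set.mem_setOf_eq, hcsu n] at hn ⊢
    intro h0
    rcases Decidable.em (n ∈ A) with h | h
    · exact hn (by rw [hcu n, if_pos h, mul_zero])
    · exact hn (by rw [hcu n, if_neg h, h0, mul_zero])
  · refine A.finite_toSet.subset fun n hn => ?_
    simp only [MBasis.supp, Set.mem_setOf_eq, hcsv n] at hn
    rw [Finset.mem_coe]
    by_contra h
    exact hn (by rw [hcv n, if_neg h, mul_zero])
  · rw [Set.disjoint_left]
    intro n hn hn'
    simp only [MBasis.supp, Set.mem_setOf_eq, hcsu n, hcsv n] at hn hn'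
    rcases Decidable.em (n ∈ A) with h | h
    · exact hn (by rw [hcu n, if_pos h, mul_zero])
    · exact hn' (by rw [hcv n, if_neg h, mul_zero])
  · intro n
    rw [hcsu n, abs_mul, abs_of_pos hMinv]
    calc M⁻¹ * |B.coord n u| ≤ M⁻¹ * M := by
          refine mul_le_mul_of_nonneg_left ?_ hMinv.le
          exact le_trans (hbound n) (by nlinarith)
      _ = 1 := inv_mul_cancel₀ (ne_of_gt hM)
  · intro m n hn
    rw [hcsu m, hcsv n, abs_mul, abs_mul]
    refine mul_le_mul_of_nonneg_left ?_ (abs_nonneg _)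
    rw [hcsv n] at hn
    have hvn : B.coord n v ≠ 0 := fun h => hn (by rw [h, mul_zero])
    have hnA : n ∈ A := by
      by_contra h
      exact hvn (by rw [hcv n, if_neg h])
    rw [hcv n, if_pos hnA]
    rcases Decidable.em (m ∈ A) with h | h
    · rw [hcu m, if_pos h, abs_zero]
      exact abs_nonneg _
    · rw [hcu m, if_neg h]
      exact hA n hnA m h
  · intro i hi
    exact absurd hi (Finset.notMem_empty i)

end MBasis
end Aux3
section Aux4
namespace MBasis
variable {X : Type*} [NormedAddCommGroup X] [NormedSpace ℝ X] (B : MBasis X)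

lemma P_sub (A : Finset ℕ) (f g : X) : B.P A (f - g) = B.P A f - B.P A g := by
  simp [MBasis.P, map_sub, sub_smul, Finset.sum_sub_distrib]

lemma finsupp_of_mem_span (u : X) (hu : u ∈ Submodule.span ℝ (Set.range B.e)) :
    B.FinSupp u := by
  refine Submodule.span_induction ?_ ?_ ?_ ?_ hu
  · rintro x ⟨n, rfl⟩
    refine (Set.finite_singleton n).subset fun m hm => ?_
    simp only [MBasis.supp, Set.mem_setOf_eq, B.biorth] at hm
    simp only [Set.mem_singleton_iff]
    by_contra h
    exact hm (if_neg h)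
  · simp [MBasis.FinSupp, B.supp_zero]
  · intro x y _ _ hx hy
    refine (hx.union hy).subset fun n hn => ?_
    simp only [MBasis.supp, Set.mem_setOf_eq, map_add] at hn
    rw [Set.mem_union]
    simp only [MBasis.supp, Set.mem_setOf_eq]
    by_contra h
    push_neg at h
    exact hn (by rw [h.1, h.2, add_zero])
  · intro r x _ hx
    refine hx.subset fun n hn => ?_
    simp only [MBasis.supp, Set.mem_setOf_eq, map_smul, smul_eq_mul] at hn ⊢
    intro h
    exact hn (by rw [h, mul_zero])

lemma exists_finsupp_near (f : X) {ε : ℝ} (hε : 0 < ε) :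
    ∃ u : X, B.FinSupp u ∧ ‖f - u‖ < ε := by
  have hf : f ∈ ((Submodule.span ℝ (Set.range B.e)).topologicalClosure : Set X) := by
    rw [B.dense_span]; trivial
  rw [Submodule.topologicalClosure_coe] at hf
  obtain ⟨u, hu, hdist⟩ := Metric.mem_closure_iff.mp hf ε hε
  exact ⟨u, B.finsupp_of_mem_span u hu, by rwa [← dist_eq_norm]⟩

theorem propFp_qg {Fp : ℝ} (hp : B.PropFp Fp) : B.QuasiGreedy Fp := by
  have hFp1 : 1 ≤ Fp := by
    have hsupp : B.FinSupp (B.e 0) := by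
      refine (Set.finite_singleton 0).subset fun n hn => ?_
      simp only [MBasis.supp, Set.mem_setOf_eq, B.biorth] at hn
      simp only [Set.mem_singleton_iff]
      by_contra h
      exact hn (if_neg h)
    have h0 := B.qg_finsupp hp (B.e 0) hsupp ∅ (by intro n hn; simp at hn)
    simp only [MBasis.P, Finset.sum_empty, sub_zero] at h0
    nlinarith [B.e_pos]
  intro f A hA
  obtain ⟨c₁, c₂, hc₁, hsn⟩ := B.semiNormalized
  have hc₂ : 0 < c₂ := lt_of_lt_of_le hc₁ (le_trans (hsn 0).2.1 (hsn 0).2.2.2)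
  set K := ∑ n ∈ A, ‖B.coord n‖ * ‖B.e n‖ with hK
  have hK0 : 0 ≤ K :=
    Finset.sum_nonneg fun n _ => mul_nonneg (norm_nonneg _) (norm_nonneg _)
  set sgn : ℕ → ℝ := fun n => if B.coord n f < 0 then -1 else 1 with hsgn
  set σ := ∑ n ∈ A, sgn n • B.e n with hσ
  refine le_of_forall_pos_le_add fun ε hε => ?_
  set C := 1 + K + Fp * (1 + K + c₂ * ‖σ‖) with hC
  have hC0 : 0 < C + 1 := by
    have h1 : 0 ≤ c₂ * ‖σ‖ := mul_nonneg hc₂.le (norm_nonneg σ)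
    have h2 : 0 ≤ Fp * (1 + K + c₂ * ‖σ‖) := mul_nonneg (by linarith) (by linarith)
    simp only [hC]
    linarith
  set δ := ε / (C + 1) with hδ
  have hδ0 : 0 < δ := div_pos hε hC0
  have hδε : δ * (C + 1) = ε := div_mul_cancel₀ ε (ne_of_gt hC0)
  obtain ⟨u, hufin, hud⟩ := B.exists_finsupp_near f hδ0
  have hud' : ‖f - u‖ ≤ δ := hud.le
  set w := B.P A f - B.P A u + (c₂ * δ) • σ with hw
  have hwsupp : ∀ n, n ∉ A → B.coord n w = 0 := by
    intro n hn
    rw [hw, map_add, map_sub, map_smul, B.coord_P, B.coord_P, hσ, B.coord_comb]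
    simp [hn]
  set v := u + w with hv
  have hvfin : B.FinSupp v := by
    refine (hufin.union A.finite_toSet).subset fun n hn => ?_
    simp only [MBasis.supp, Set.mem_setOf_eq, hv, map_add] at hn
    rw [Set.mem_union]
    rcases Decidable.em (n ∈ A) with h | h
    · exact Or.inr (Finset.mem_coe.mpr h)
    · left
      simp only [MBasis.supp, Set.mem_setOf_eq]
      intro h0
      exact hn (by rw [h0, hwsupp n h, add_zero])
  have hcvin : ∀ n ∈ A, B.coord n v = B.coord n f + (c₂ * δ) * sgn n := by
    intro n hn
    rw [hv, map_add, hw, map_add, map_sub, map_smul, B.coord_P, B.coord_P,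
      hσ, B.coord_comb, if_pos hn, if_pos hn, if_pos hn]
    simp only [smul_eq_mul]
    ring
  have hcvout : ∀ n, n ∉ A → B.coord n v = B.coord n u := by
    intro n hn
    rw [hv, map_add, hwsupp n hn, add_zero]
  have ht0 : 0 ≤ c₂ * δ := le_of_lt (mul_pos hc₂ hδ0)
  have habs : ∀ n ∈ A, |B.coord n v| = |B.coord n f| + c₂ * δ := by
    intro n hn
    rw [hcvin n hn]
    by_cases hx : B.coord n f < 0
    · rw [show sgn n = -1 by simp only [hsgn]; exact if_pos hx, mul_neg_one,
        abs_of_nonpos (by linarith), abs_of_neg hx]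
      ring
    · push_neg at hx
      rw [show sgn n = 1 by simp only [hsgn]; exact if_neg (not_lt.mpr hx), mul_one,
        abs_of_nonneg (by linarith), abs_of_nonneg hx]
  have hcoordclose : ∀ m, |B.coord m u| ≤ |B.coord m f| + c₂ * δ := by
    intro m
    have h1 : |B.coord m u - B.coord m f| ≤ c₂ * δ := by
      rw [← map_sub]
      calc |B.coord m (u - f)| = ‖B.coord m (u - f)‖ := (Real.norm_eq_abs _).symm
        _ ≤ ‖B.coord m‖ * ‖u - f‖ := (B.coord m).le_opNorm _
        _ ≤ c₂ * δ := by
            rw [norm_sub_rev]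
            exact mul_le_mul (hsn m).2.2.2 hud' (norm_nonneg _) hc₂.le
    have h2 : |B.coord m u| - |B.coord m f| ≤ |B.coord m u - B.coord m f| :=
      abs_sub_abs_le_abs_sub _ _
    linarith
  have hGreedyv : B.Greedy v A := by
    intro n hn m hm
    rw [habs n hn, hcvout m hm]
    have := hA n hn m hm
    linarith [hcoordclose m]
  have hPw : B.P A w = w :=
    B.P_eq_self w A fun n hn => by
      by_contra h
      exact hn (hwsupp n h)
  have hvP : v - B.P A v = u - B.P A u := by
    rw [hv, B.P_add, hPw]
    abel
  have hkey : ‖v - B.P A v‖ ≤ Fp * ‖v‖ := B.qg_finsupp hp v hvfin A hGreedyv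
  have hPfu : ‖B.P A (f - u)‖ ≤ K * δ := by
    refine le_trans (B.norm_P_le A (f - u)) ?_
    exact mul_le_mul_of_nonneg_left hud' hK0
  have hfP : f - B.P A f = (f - u) - B.P A (f - u) + (v - B.P A v) := by
    rw [hvP, B.P_sub]
    abel
  have hvnorm : ‖v‖ ≤ ‖f‖ + δ + K * δ + (c₂ * δ) * ‖σ‖ := by
    have hveq : v = f + (u - f) + (B.P A f - B.P A u) + (c₂ * δ) • σ := by
      rw [hv, hw]; abel
    rw [hveq]
    have h1 : ‖f + (u - f) + (B.P A f - B.P A u) + (c₂ * δ) • σ‖ ≤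
        ‖f‖ + ‖u - f‖ + ‖B.P A f - B.P A u‖ + ‖(c₂ * δ) • σ‖ := by
      refine le_trans (norm_add_le _ _) ?_
      refine add_le_add ?_ le_rfl
      refine le_trans (norm_add_le _ _) ?_
      exact add_le_add (norm_add_le _ _) le_rfl
    have h2 : ‖u - f‖ ≤ δ := by rw [norm_sub_rev]; exact hud'
    have h3 : ‖B.P A f - B.P A u‖ ≤ K * δ := by rw [← B.P_sub]; exact hPfu
    have h4 : ‖(c₂ * δ) • σ‖ = (c₂ * δ) * ‖σ‖ := by
      rw [norm_smul, Real.norm_eq_abs, abs_of_nonneg ht0]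
    linarith
  have hmain : ‖f - B.P A f‖ ≤ δ + K * δ + Fp * ‖v‖ := by
    rw [hfP]
    refine le_trans (norm_add_le _ _) ?_
    refine add_le_add (le_trans (norm_sub_le _ _) (add_le_add hud' hPfu)) hkey
  have hFv : Fp * ‖v‖ ≤ Fp * (‖f‖ + δ + K * δ + (c₂ * δ) * ‖σ‖) :=
    mul_le_mul_of_nonneg_left hvnorm (by linarith)
  have hσ0 : 0 ≤ ‖σ‖ := norm_nonneg _
  nlinarith [hδε, hδ0.le]

end MBasis
end Aux4
/-- A basis has Property (F_p) if and only if it is quasi-greedy and conservative; moreover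
`max{Δ_c, C_q} ≤ 𝓕_p ≤ 2 + C_q + 2 C_q Δ_c`. -/
theorem propFp_iff_quasiGreedy_conservative
    {X : Type*} [NormedAddCommGroup X] [NormedSpace ℝ X] [CompleteSpace X]
    (B : MBasis X) :
    (∀ Fp : ℝ, B.PropFp Fp → B.QuasiGreedy Fp ∧ B.Conservative Fp) ∧
    (∀ Cq Δc : ℝ, B.QuasiGreedy Cq → B.Conservative Δc →
      B.PropFp (2 + Cq + 2 * Cq * Δc)) := by
  exact ⟨fun Fp hp => ⟨B.propFp_qg hp, B.propFp_cons hp⟩,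
    fun Cq Δc hq hc => B.qg_cons_propFp hq hc⟩
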